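/- Let α be irrational with Ostrowski expansion N = ∑_{i=0}^n b_i q_i. Then P_N(α) = ∏_{i=0}^n ∏_{c=0}^{b_i - 1} P_{q_i}(α, ε_{i,c}(N)), where ε_{i,k}(N) := q_i (k δ_i + ∑_{j=1}^{n-i} (-1)^j b_{i+j} δ_{i+j}) and P_{q_i}(α, ε) := ∏_{r=1}^{q_i} 2|sin(π(rα + (-1)^i ε/q_i))|. -/

import Mathlib

open Filter Real

/-- The Sudler product `P_N(α) = ∏_{r=1}^N 2 |sin (π r α)|`. -/
noncomputable def sudler (α : ℝ) (N : ℕ) : ℝ :=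
  ∏ r ∈ Finset.Icc 1 N, 2 * |Real.sin (Real.pi * r * α)|

/-- The Gauss map `x ↦ {1/x}`. -/
noncomputable def gaussMap (x : ℝ) : ℝ := Int.fract x⁻¹

/-- The `n`-th partial quotient `a_n` (for `n ≥ 1`) of the continued fraction
expansion of `α`, obtained by iterating the Gauss map. -/
noncomputable def partQuot (α : ℝ) (n : ℕ) : ℕ :=
  (⌊(gaussMap^[n - 1] (Int.fract α))⁻¹⌋).toNat

/-- The denominators `q_k` of the continued fraction convergents of `α`:
`q_0 = 1`, `q_1 = a_1`, `q_{k+2} = a_{k+2} q_{k+1} + q_k`. -/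
noncomputable def qden (α : ℝ) : ℕ → ℕ
  | 0 => 1
  | 1 => partQuot α 1
  | (n + 2) => partQuot α (n + 2) * qden α (n + 1) + qden α n

/-- The numerators `p_k` of the continued fraction convergents of `α`. -/
noncomputable def pnum (α : ℝ) : ℕ → ℤ
  | 0 => ⌊α⌋
  | 1 => partQuot α 1 * ⌊α⌋ + 1
  | (n + 2) => partQuot α (n + 2) * pnum α (n + 1) + pnum α n

/-- Distance from `x` to the nearest integer, `‖x‖`. -/
noncomputable def nearestDist (x : ℝ) : ℝ := |x - round x|

namespace SudlerOstrowskiAux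

noncomputable def xseq (α : ℝ) (k : ℕ) : ℝ := gaussMap^[k] (Int.fract α)
noncomputable def beta (α : ℝ) (k : ℕ) : ℝ := ∏ j ∈ Finset.range (k + 1), xseq α j

variable {α : ℝ}

lemma xseq_succ (k : ℕ) : xseq α (k + 1) = Int.fract (xseq α k)⁻¹ := by
  simp [xseq, Function.iterate_succ_apply', gaussMap]

lemma irr_fract {y : ℝ} (h : Irrational y) : Irrational (Int.fract y) := by
  have := h.sub_intCast ⌊y⌋
  rwa [Int.self_sub_floor] at this

lemma fract_mem {y : ℝ} (h : Irrational y) : 0 < Int.fract y ∧ Int.fract y < 1 := by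
  refine ⟨lt_of_le_of_ne (Int.fract_nonneg y) fun hy => ?_, Int.fract_lt_one y⟩
  exact (irr_fract h).ne_int 0 (by simpa using hy.symm)

lemma xseq_mem (hα : Irrational α) (k : ℕ) :
    Irrational (xseq α k) ∧ 0 < xseq α k ∧ xseq α k < 1 := by
  induction k with
  | zero =>
    exact ⟨irr_fract hα, (fract_mem hα).1, (fract_mem hα).2⟩
  | succ k ih =>
    obtain ⟨hirr, h0, h1⟩ := ih
    rw [xseq_succ]
    exact ⟨irr_fract hirr.inv, (fract_mem hirr.inv).1, (fract_mem hirr.inv).2⟩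

lemma partQuot_succ (k : ℕ) : partQuot α (k + 1) = (⌊(xseq α k)⁻¹⌋).toNat := rfl

lemma one_le_floor_inv (hα : Irrational α) (k : ℕ) : 1 ≤ ⌊(xseq α k)⁻¹⌋ := by
  obtain ⟨_, h0, h1⟩ := xseq_mem hα k
  have : (1 : ℝ) < (xseq α k)⁻¹ := (one_lt_inv₀ h0).2 h1
  exact Int.le_floor.2 (by exact_mod_cast this.le)

lemma partQuot_cast (hα : Irrational α) (k : ℕ) :
    ((partQuot α (k + 1) : ℕ) : ℝ) = (⌊(xseq α k)⁻¹⌋ : ℝ) := by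
  have h0 : (0:ℤ) ≤ ⌊(xseq α k)⁻¹⌋ := le_trans (by norm_num) (one_le_floor_inv hα k)
  rw [partQuot_succ, ← Int.cast_natCast (R := ℝ), Int.toNat_of_nonneg h0]

lemma one_le_partQuot (hα : Irrational α) (k : ℕ) : 1 ≤ partQuot α (k + 1) := by
  rw [partQuot_succ]
  have := one_le_floor_inv hα k
  omega

lemma xseq_rec (hα : Irrational α) (k : ℕ) :
    xseq α (k + 1) = (xseq α k)⁻¹ - (partQuot α (k + 1) : ℝ) := by
  rw [xseq_succ, partQuot_cast hα, Int.fract]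

lemma beta_succ (k : ℕ) : beta α (k + 1) = beta α k * xseq α (k + 1) :=
  Finset.prod_range_succ _ _

lemma beta_pos (hα : Irrational α) (k : ℕ) : 0 < beta α k :=
  Finset.prod_pos fun j _ => (xseq_mem hα j).2.1

lemma beta_zero : beta α 0 = xseq α 0 := by simp [beta]

lemma xseq_mul (hα : Irrational α) (k : ℕ) :
    xseq α k * xseq α (k + 1) = 1 - (partQuot α (k + 1) : ℝ) * xseq α k := by
  have h0 := (xseq_mem hα k).2.1
  rw [xseq_rec hα, mul_sub, mul_inv_cancel₀ (ne_of_gt h0)]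
  ring

lemma conv (hα : Irrational α) :
    ∀ k, (qden α k : ℝ) * α - (pnum α k : ℝ) = (-1 : ℝ) ^ k * beta α k := by
  have hx0 : xseq α 0 = α - (⌊α⌋ : ℝ) := by
    rw [show xseq α 0 = Int.fract α from rfl, Int.fract]
  have base0 : (qden α 0 : ℝ) * α - (pnum α 0 : ℝ) = (-1 : ℝ) ^ 0 * beta α 0 := by
    rw [show qden α 0 = 1 from rfl, show pnum α 0 = ⌊α⌋ from rfl, beta_zero, hx0]
    push_cast; ring
  have base1 : (qden α 1 : ℝ) * α - (pnum α 1 : ℝ) = (-1 : ℝ) ^ 1 * beta α 1 := by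
    have h : xseq α 0 * xseq α 1 = 1 - (partQuot α 1 : ℝ) * xseq α 0 := xseq_mul hα 0
    rw [show beta α 1 = beta α 0 * xseq α 1 from beta_succ 0, beta_zero,
      show (qden α 1) = partQuot α 1 from rfl,
      show pnum α 1 = partQuot α 1 * ⌊α⌋ + 1 from rfl, hx0]
    rw [hx0] at h
    push_cast
    linear_combination h
  suffices h : ∀ k, ((qden α k : ℝ) * α - (pnum α k : ℝ) = (-1 : ℝ) ^ k * beta α k) ∧
      ((qden α (k+1) : ℝ) * α - (pnum α (k+1) : ℝ) = (-1 : ℝ) ^ (k+1) * beta α (k+1)) by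
    exact fun k => (h k).1
  intro k
  induction k with
  | zero => exact ⟨base0, base1⟩
  | succ k ih =>
    refine ⟨ih.2, ?_⟩
    have h1 := ih.1
    have h2 := ih.2
    have hq : (qden α (k+2) : ℝ) = (partQuot α (k+2) : ℝ) * (qden α (k+1) : ℝ) + (qden α k : ℝ) := by
      rw [show qden α (k+2) = partQuot α (k+2) * qden α (k+1) + qden α k from rfl]; push_cast; ring
    have hp : (pnum α (k+2) : ℝ) = (partQuot α (k+2) : ℝ) * (pnum α (k+1) : ℝ) + (pnum α k : ℝ) := by
      rw [show pnum α (k+2) = partQuot α (k+2) * pnum α (k+1) + pnum α k from rfl]; push_cast; ring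
    have hmul : xseq α (k+1) * xseq α (k+2) = 1 - (partQuot α (k+2) : ℝ) * xseq α (k+1) :=
      xseq_mul hα (k+1)
    have hb2 : beta α (k+2) = beta α k * (xseq α (k+1) * xseq α (k+2)) := by
      rw [show beta α (k+2) = beta α (k+1) * xseq α (k+2) from beta_succ (k+1), beta_succ k]
      ring
    rw [beta_succ k] at h2
    have e1 : (-1:ℝ)^(k+1) = -(-1:ℝ)^k := by ring
    have e2 : (-1:ℝ)^(k+2) = (-1:ℝ)^k := by ring
    rw [e1] at h2
    rw [hq, hp, hb2, hmul, e2]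
    linear_combination (partQuot α (k+2) : ℝ) * h2 + h1

lemma beta_one_lt (hα : Irrational α) : beta α 1 < 1 / 2 := by
  have h := xseq_mul hα 0
  have hx0 := (xseq_mem hα 0).2.1
  have hirr := (xseq_mem hα 0).1
  have hne : xseq α 0 ≠ 1/2 := by
    have := hirr.ne_rat (1/2)
    simpa using this
  have hb1 : beta α 1 = 1 - (partQuot α 1 : ℝ) * xseq α 0 := by
    rw [beta_succ 0, beta_zero]; exact h
  have hfl : (partQuot α 1 : ℝ) = (⌊(xseq α 0)⁻¹⌋ : ℝ) := partQuot_cast hα 0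
  have hgt : (partQuot α 1 : ℝ) * xseq α 0 > 1/2 := by
    rcases lt_or_ge (xseq α 0) (1/2) with hlt | hge
    · have : ((⌊(xseq α 0)⁻¹⌋ : ℝ)) > (xseq α 0)⁻¹ - 1 := Int.sub_one_lt_floor _
      have hinv : (xseq α 0)⁻¹ * xseq α 0 = 1 := inv_mul_cancel₀ (ne_of_gt hx0)
      nlinarith
    · have h1 : (1 : ℝ) ≤ (partQuot α 1 : ℝ) := by
        exact_mod_cast one_le_partQuot hα 0
      nlinarith [lt_of_le_of_ne hge (Ne.symm hne)]
  linarith [hb1 ▸ (by linarith : (1:ℝ) - (partQuot α 1 : ℝ) * xseq α 0 < 1/2)]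

lemma beta_lt_half (hα : Irrational α) {k : ℕ} (hk : 1 ≤ k) : beta α k < 1 / 2 := by
  induction k with
  | zero => omega
  | succ k ih =>
    rcases Nat.eq_or_lt_of_le hk with h1 | h1
    · rw [← h1]
      exact beta_one_lt hα
    · have hk1 : 1 ≤ k := by omega
      have := ih hk1
      have hx := xseq_mem hα (k+1)
      have hb := beta_pos hα k
      rw [beta_succ]
      nlinarith [hx.2.1, hx.2.2]

lemma beta_zero_lt (hα : Irrational α) (h2 : 2 ≤ partQuot α 1) : beta α 0 < 1 / 2 := by
  have hfl : (partQuot α 1 : ℝ) = (⌊(xseq α 0)⁻¹⌋ : ℝ) := partQuot_cast hα 0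
  have h2' : (2 : ℝ) ≤ (⌊(xseq α 0)⁻¹⌋ : ℝ) := by rw [← hfl]; exact_mod_cast h2
  have hle : ((⌊(xseq α 0)⁻¹⌋ : ℝ)) ≤ (xseq α 0)⁻¹ := Int.floor_le _
  have hx0 := (xseq_mem hα 0).2.1
  have hirr := (xseq_mem hα 0).1
  have hne : xseq α 0 ≠ 1/2 := by
    have := hirr.ne_rat (1/2)
    simpa using this
  have h2i : (2:ℝ) ≤ (xseq α 0)⁻¹ := le_trans h2' hle
  have hinv : (xseq α 0)⁻¹ * xseq α 0 = 1 := inv_mul_cancel₀ (ne_of_gt hx0)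
  have hhalf : xseq α 0 ≤ 1/2 := by nlinarith
  rw [beta_zero]
  exact lt_of_le_of_ne hhalf hne

lemma round_eq_of {x : ℝ} {m : ℤ} (h : |x - m| < 1/2) : round x = m := by
  rw [round_eq]
  have := abs_lt.1 h
  apply Int.floor_eq_iff.2
  constructor <;> push_cast <;> linarith [this.1, this.2]

lemma key_int (hα : Irrational α) (k : ℕ) (hk : beta α k < 1/2) :
    (qden α k : ℝ) * α - (-1 : ℝ) ^ k * nearestDist ((qden α k : ℝ) * α) = (pnum α k : ℝ) := by
  have hc := conv hα k
  have hb := beta_pos hα k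
  have habs : |(qden α k : ℝ) * α - (pnum α k : ℝ)| < 1/2 := by
    rw [hc, abs_mul, abs_pow, abs_neg, abs_one, one_pow, one_mul, abs_of_pos hb]
    exact hk
  have hr : round ((qden α k : ℝ) * α) = pnum α k := round_eq_of habs
  have hd : nearestDist ((qden α k : ℝ) * α) = beta α k := by
    rw [nearestDist, hr, hc, abs_mul, abs_pow, abs_neg, abs_one, one_pow, one_mul, abs_of_pos hb]
  rw [hd]
  linarith [hc]

lemma qden_pos (hα : Irrational α) (i : ℕ) : 0 < qden α i := by
  suffices h : ∀ k, 0 < qden α k ∧ 0 < qden α (k+1) from (h i).1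
  intro k
  induction k with
  | zero =>
    refine ⟨by norm_num [qden], ?_⟩
    rw [show qden α 1 = partQuot α 1 from rfl]
    exact one_le_partQuot hα 0
  | succ k ih =>
    refine ⟨ih.2, ?_⟩
    rw [show qden α (k+2) = partQuot α (k+2) * qden α (k+1) + qden α k from rfl]
    have := ih.1
    omega

lemma prod_shift (M q : ℕ) (f : ℕ → ℝ) :
    ∏ r ∈ Finset.Ioc M (M + q), f r = ∏ r ∈ Finset.Icc 1 q, f (M + r) := by
  rw [← Finset.Icc_add_one_left_eq_Ioc,
    show Finset.Icc (M + 1) (M + q) = (Finset.Icc 1 q).map (addLeftEmbedding M) from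
      (Finset.map_add_left_Icc _ _ _).symm,
    Finset.prod_map]
  rfl

lemma prod_blocks (f : ℕ → ℝ) (a q : ℕ) :
    ∀ m, ∏ r ∈ Finset.Ioc a (a + m * q), f r =
      ∏ c ∈ Finset.range m, ∏ r ∈ Finset.Icc 1 q, f (a + c * q + r) := by
  intro m
  induction m with
  | zero => simp
  | succ m ih =>
    rw [Finset.prod_range_succ, ← ih,
      show a + (m + 1) * q = (a + m * q) + q by ring,
      ← Finset.prod_Ioc_consecutive f (Nat.le_add_right a (m * q))
        (Nat.le_add_right (a + m * q) q),
      prod_shift (a + m * q) q f]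

lemma tail_decomp (f : ℕ → ℝ) (b q : ℕ → ℕ) (n : ℕ) :
    ∀ k, k ≤ n + 1 →
      ∏ r ∈ Finset.Ioc 0 (∑ j ∈ Finset.Ico (n + 1 - k) (n + 1), b j * q j), f r =
      ∏ i ∈ Finset.Ico (n + 1 - k) (n + 1), ∏ c ∈ Finset.range (b i),
        ∏ r ∈ Finset.Icc 1 (q i),
          f ((∑ j ∈ Finset.Ico (i + 1) (n + 1), b j * q j) + c * q i + r) := by
  intro k
  induction k with
  | zero => simp
  | succ k ih =>
    intro hk
    have hik : n + 1 - (k + 1) = n - k := by omega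
    have hik2 : n + 1 - k = (n - k) + 1 := by omega
    rw [hik]
    rw [hik2] at ih
    have hlt : n - k < n + 1 := by omega
    have hsum : ∑ j ∈ Finset.Ico (n - k) (n + 1), b j * q j =
        (∑ j ∈ Finset.Ico (n - k + 1) (n + 1), b j * q j) + b (n - k) * q (n - k) := by
      rw [Finset.sum_eq_sum_Ico_succ_bot hlt]
      exact Nat.add_comm _ _
    rw [hsum,
      ← Finset.prod_Ioc_consecutive f
        (Nat.zero_le (∑ j ∈ Finset.Ico (n - k + 1) (n + 1), b j * q j))
        (Nat.le_add_right _ _),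
      prod_blocks f _ (q (n - k)) (b (n - k)),
      ih (by omega),
      Finset.prod_eq_prod_Ico_succ_bot hlt]
    exact mul_comm _ _

end SudlerOstrowskiAux

open SudlerOstrowskiAux in
/-- The decomposition of `P_N(α)` into perturbed Sudler products along the
Ostrowski expansion `N = ∑_{i=0}^n b_i q_i`. -/
theorem sudler_ostrowski_decomposition (α : ℝ) (hα : Irrational α)
    (n N : ℕ) (b : ℕ → ℕ)
    (hN : N = ∑ i ∈ Finset.range (n + 1), b i * qden α i)
    (hb0 : b 0 < partQuot α 1)
    (hb : ∀ i : ℕ, 1 ≤ i → i ≤ n → b i ≤ partQuot α (i + 1))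
    (hbr : ∀ i : ℕ, 1 ≤ i → i ≤ n → b i = partQuot α (i + 1) → b (i - 1) = 0) :
    sudler α N =
      ∏ i ∈ Finset.range (n + 1), ∏ c ∈ Finset.range (b i),
        ∏ r ∈ Finset.Icc 1 (qden α i),
          2 * |Real.sin (Real.pi * ((r : ℝ) * α +
            (-1 : ℝ) ^ i *
              ((qden α i : ℝ) * ((c : ℝ) * nearestDist ((qden α i : ℝ) * α) +
                ∑ j ∈ Finset.Icc 1 (n - i),
                  (-1 : ℝ) ^ j * (b (i + j) : ℝ) *
                    nearestDist ((qden α (i + j) : ℝ) * α))) / (qden α i : ℝ)))| := by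
  have hdec := tail_decomp (fun r => 2 * |Real.sin (Real.pi * r * α)|) b (qden α) n (n + 1) le_rfl
  simp only [Nat.sub_self] at hdec
  have hIcc : Finset.Icc 1 N = Finset.Ioc 0 N := by
    ext x
    simp only [Finset.mem_Icc, Finset.mem_Ioc]
    omega
  rw [sudler, hIcc, show N = ∑ j ∈ Finset.Ico 0 (n + 1), b j * qden α j from by
      rw [hN, Finset.range_eq_Ico], hdec, ← Finset.range_eq_Ico]
  refine Finset.prod_congr rfl fun i hi => Finset.prod_congr rfl fun c hc =>
    Finset.prod_congr rfl fun r _ => ?_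
  have hin : i ≤ n := by
    have := Finset.mem_range.1 hi
    omega
  have hci : c < b i := Finset.mem_range.1 hc
  set S : ℕ := ∑ j ∈ Finset.Ico (i + 1) (n + 1), b j * qden α j with hS
  set E : ℝ := (c : ℝ) * nearestDist ((qden α i : ℝ) * α) +
      ∑ j ∈ Finset.Icc 1 (n - i),
        (-1 : ℝ) ^ j * (b (i + j) : ℝ) * nearestDist ((qden α (i + j) : ℝ) * α) with hE
  have hq0 : ((qden α i : ℕ) : ℝ) ≠ 0 := by
    exact_mod_cast (qden_pos hα i).ne'
  have hθ : (-1 : ℝ) ^ i * ((qden α i : ℝ) * E) / (qden α i : ℝ) = (-1 : ℝ) ^ i * E := by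
    field_simp
  -- the key congruence: S + c q_i times α differs from the perturbation by an integer
  have keyi : (qden α i : ℝ) * α - (-1 : ℝ) ^ i * nearestDist ((qden α i : ℝ) * α)
      = (pnum α i : ℝ) := by
    cases i with
    | zero =>
      have h2 : 2 ≤ partQuot α 1 := by omega
      exact key_int hα 0 (beta_zero_lt hα h2)
    | succ j =>
      exact key_int hα (j + 1) (beta_lt_half hα (by omega))
  have hre : ∀ g : ℕ → ℝ,
      ∑ j ∈ Finset.Ico (i + 1) (n + 1), g j = ∑ j ∈ Finset.Icc 1 (n - i), g (i + j) := by
    intro g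
    rw [show Finset.Ico (i + 1) (n + 1) = (Finset.Icc 1 (n - i)).map (addLeftEmbedding i) from ?_,
      Finset.sum_map]
    · simp [addLeftEmbedding_apply]
    · rw [Finset.map_add_left_Icc]
      ext x
      simp only [Finset.mem_Icc, Finset.mem_Ico]
      omega
  have hScast : (S : ℝ) = ∑ j ∈ Finset.Icc 1 (n - i), (b (i + j) : ℝ) * (qden α (i + j) : ℝ) := by
    rw [hS]
    push_cast
    rw [hre (fun j => (b j : ℝ) * (qden α j : ℝ))]
  have hterm : ∀ j ∈ Finset.Icc 1 (n - i),
      (b (i + j) : ℝ) * ((qden α (i + j) : ℝ) * α) -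
        (-1 : ℝ) ^ i * ((-1 : ℝ) ^ j * (b (i + j) : ℝ) * nearestDist ((qden α (i + j) : ℝ) * α))
      = (b (i + j) : ℝ) * (pnum α (i + j) : ℝ) := by
    intro j hj
    have hj1 : 1 ≤ j := (Finset.mem_Icc.1 hj).1
    have hk := key_int hα (i + j) (beta_lt_half hα (by omega))
    calc (b (i + j) : ℝ) * ((qden α (i + j) : ℝ) * α) -
          (-1 : ℝ) ^ i * ((-1 : ℝ) ^ j * (b (i + j) : ℝ) * nearestDist ((qden α (i + j) : ℝ) * α))
        = (b (i + j) : ℝ) * ((qden α (i + j) : ℝ) * α -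
            (-1 : ℝ) ^ (i + j) * nearestDist ((qden α (i + j) : ℝ) * α)) := by
          rw [pow_add]; ring
      _ = (b (i + j) : ℝ) * (pnum α (i + j) : ℝ) := by rw [hk]
  set m : ℤ := c * pnum α i + ∑ j ∈ Finset.Icc 1 (n - i), (b (i + j) : ℤ) * pnum α (i + j) with hm
  have hMθ : ((S + c * qden α i : ℕ) : ℝ) * α - (-1 : ℝ) ^ i * E = (m : ℝ) := by
    have e1 : ∑ j ∈ Finset.Icc 1 (n - i),
        ((b (i + j) : ℝ) * ((qden α (i + j) : ℝ) * α) -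
          (-1 : ℝ) ^ i * ((-1 : ℝ) ^ j * (b (i + j) : ℝ) * nearestDist ((qden α (i + j) : ℝ) * α)))
        = (∑ j ∈ Finset.Icc 1 (n - i), (b (i + j) : ℝ) * (qden α (i + j) : ℝ)) * α -
          (-1 : ℝ) ^ i * ∑ j ∈ Finset.Icc 1 (n - i),
            (-1 : ℝ) ^ j * (b (i + j) : ℝ) * nearestDist ((qden α (i + j) : ℝ) * α) := by
      rw [Finset.sum_mul, Finset.mul_sum, ← Finset.sum_sub_distrib]
      exact Finset.sum_congr rfl fun j _ => by ring
    have e2 : ∑ j ∈ Finset.Icc 1 (n - i),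
        ((b (i + j) : ℝ) * ((qden α (i + j) : ℝ) * α) -
          (-1 : ℝ) ^ i * ((-1 : ℝ) ^ j * (b (i + j) : ℝ) * nearestDist ((qden α (i + j) : ℝ) * α)))
        = ∑ j ∈ Finset.Icc 1 (n - i), (b (i + j) : ℝ) * (pnum α (i + j) : ℝ) :=
      Finset.sum_congr rfl hterm
    have hmcast : (m : ℝ) = (c : ℝ) * (pnum α i : ℝ) +
        ∑ j ∈ Finset.Icc 1 (n - i), (b (i + j) : ℝ) * (pnum α (i + j) : ℝ) := by
      rw [hm]
      push_cast
      ring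
    have hcast : ((S + c * qden α i : ℕ) : ℝ) = (S : ℝ) + (c : ℝ) * (qden α i : ℝ) := by
      push_cast
      ring
    rw [hcast, hScast, hE, hmcast, ← e2, e1, ← keyi]
    ring
  have harg : Real.pi * ((S + c * qden α i + r : ℕ) : ℝ) * α =
      Real.pi * ((r : ℝ) * α + (-1 : ℝ) ^ i * E) + (m : ℝ) * Real.pi := by
    have : ((S + c * qden α i + r : ℕ) : ℝ) = ((S + c * qden α i : ℕ) : ℝ) + (r : ℝ) := by
      push_cast; ring
    rw [this]
    linear_combination Real.pi * hMθ
  show 2 * |Real.sin (Real.pi * ((S + c * qden α i + r : ℕ) : ℝ) * α)| = _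
  rw [hθ, harg, Real.sin_add_int_mul_pi, abs_mul, show |(-1:ℝ) ^ m| = 1 from by
    rcases Int.even_or_odd m with hpar | hpar
    · rw [hpar.neg_one_zpow, abs_one]
    · rw [hpar.neg_one_zpow, abs_neg, abs_one], one_mul]
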